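/- In the coalescence setting (G is the coalescence of H₁ and H₂ via the non-isolated vertex x), if for some i ∈ {1,2} the graph Hᵢ is critical, the graph H_{3−i} is weak bicritical, and x is a critical vertex of H_{3−i}, then G is weak bicritical. -/
import Mathlib


open SimpleGraph Set

/-- `S` is a dominating set of the induced subgraph of `G` on the vertex set `A`:
`S ⊆ A` and every vertex of `A` is in the closed neighborhood of some vertex of `S`. -/
def IsDomOn {V : Type*} (G : SimpleGraph V) (A S : Set V) : Prop :=
  S ⊆ A ∧ ∀ v ∈ A, ∃ s ∈ S, s = v ∨ G.Adj s v

/-- The domination number of the induced subgraph of `G` on the vertex set `A`. -/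
noncomputable def domNumOn {V : Type*} (G : SimpleGraph V) (A : Set V) : ℕ :=
  sInf {n | ∃ S : Set V, IsDomOn G A S ∧ S.ncard = n}

/-- The domination number of `G`. -/
noncomputable def domNum {V : Type*} (G : SimpleGraph V) : ℕ :=
  domNumOn G Set.univ

/-- `y` is a critical vertex of the induced subgraph of `G` on `A`:
deleting `y` decreases the domination number. -/
def IsCritVertexOn {V : Type*} (G : SimpleGraph V) (A : Set V) (y : V) : Prop :=
  domNumOn G (A \ {y}) < domNumOn G A

/-- The induced subgraph of `G` on `A` is critical: all its vertices are critical. -/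
def CriticalOn {V : Type*} (G : SimpleGraph V) (A : Set V) : Prop :=
  ∀ y ∈ A, IsCritVertexOn G A y

/-- The induced subgraph of `G` on `A` is weak bicritical: no vertex deletion increases the
domination number (`V⁺ = ∅`), and deleting any vertex that keeps the domination number
unchanged (a vertex of `V⁰`) yields a critical graph. -/
def WeakBicriticalOn {V : Type*} (G : SimpleGraph V) (A : Set V) : Prop :=
  (∀ y ∈ A, domNumOn G (A \ {y}) ≤ domNumOn G A) ∧
  (∀ y ∈ A, domNumOn G (A \ {y}) = domNumOn G A → CriticalOn G (A \ {y}))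


set_option linter.unusedSectionVars false

section Aux
variable {V : Type*} [Fintype V] (G : SimpleGraph V)

lemma isDomOn_self (A : Set V) : IsDomOn G A A :=
  ⟨subset_rfl, fun v hv => ⟨v, hv, Or.inl rfl⟩⟩

lemma exists_min_dom (A : Set V) :
    ∃ S : Set V, IsDomOn G A S ∧ S.ncard = domNumOn G A := by
  have h : {n | ∃ S : Set V, IsDomOn G A S ∧ S.ncard = n}.Nonempty :=
    ⟨A.ncard, A, isDomOn_self G A, rfl⟩
  exact Nat.sInf_mem h

lemma domNumOn_le {A S : Set V} (h : IsDomOn G A S) : domNumOn G A ≤ S.ncard :=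
  Nat.sInf_le ⟨S, h, rfl⟩

lemma domNumOn_union_le (A B : Set V) :
    domNumOn G (A ∪ B) ≤ domNumOn G A + domNumOn G B := by
  obtain ⟨S, hS, hSc⟩ := exists_min_dom G A
  obtain ⟨T, hT, hTc⟩ := exists_min_dom G B
  have : IsDomOn G (A ∪ B) (S ∪ T) := by
    refine ⟨union_subset_union hS.1 hT.1, ?_⟩
    rintro v (hv | hv)
    · obtain ⟨s, hs, h⟩ := hS.2 v hv; exact ⟨s, Or.inl hs, h⟩
    · obtain ⟨s, hs, h⟩ := hT.2 v hv; exact ⟨s, Or.inr hs, h⟩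
  calc domNumOn G (A ∪ B) ≤ (S ∪ T).ncard := domNumOn_le G this
    _ ≤ S.ncard + T.ncard := Set.ncard_union_le S T
    _ = _ := by rw [hSc, hTc]

lemma domNumOn_le_sdiff_add_one {A : Set V} {y : V} (hy : y ∈ A) :
    domNumOn G A ≤ domNumOn G (A \ {y}) + 1 := by
  obtain ⟨S, hS, hSc⟩ := exists_min_dom G (A \ {y})
  have : IsDomOn G A (insert y S) := by
    refine ⟨insert_subset hy (hS.1.trans diff_subset), ?_⟩
    intro v hv
    by_cases hvy : v = y
    · exact ⟨y, mem_insert _ _, Or.inl hvy.symm⟩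
    · obtain ⟨s, hs, h⟩ := hS.2 v ⟨hv, hvy⟩
      exact ⟨s, Or.inr hs, h⟩
  calc domNumOn G A ≤ (insert y S).ncard := domNumOn_le G this
    _ ≤ S.ncard + 1 := Set.ncard_insert_le y S
    _ = _ := by rw [hSc]

end Aux

section Coal
variable {V : Type*} [Fintype V] {G : SimpleGraph V} {x : V} {V1 V2 : Set V}

lemma side_insert (hxW : x ∈ V1)
    (hsepW : ∀ a ∈ V1, ∀ b ∈ V2, a ≠ x → b ≠ x → ¬ G.Adj a b)
    (hcover : ∀ u, u ∈ V1 ∨ u ∈ V2) {D : Set V} (hD : IsDomOn G Set.univ D) :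
    IsDomOn G V1 (insert x (D ∩ V1)) := by
  refine ⟨insert_subset hxW inter_subset_right, ?_⟩
  intro v hv
  by_cases hvx : v = x
  · exact ⟨x, mem_insert _ _, Or.inl hvx.symm⟩
  · obtain ⟨s, hsD, hcase⟩ := hD.2 v trivial
    rcases hcase with rfl | hadj
    · exact ⟨s, mem_insert_of_mem _ ⟨hsD, hv⟩, Or.inl rfl⟩
    · by_cases hsW : s ∈ V1
      · exact ⟨s, mem_insert_of_mem _ ⟨hsD, hsW⟩, Or.inr hadj⟩
      · have hsW' : s ∈ V2 := (hcover s).resolve_left hsW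
        by_cases hsx : s = x
        · exact ⟨x, mem_insert _ _, Or.inr (hsx ▸ hadj)⟩
        · exact absurd hadj.symm (hsepW v hv s hsW' hvx hsx)

lemma side_strong (hxW : x ∈ V1)
    (hsepW : ∀ a ∈ V1, ∀ b ∈ V2, a ≠ x → b ≠ x → ¬ G.Adj a b)
    (hcover : ∀ u, u ∈ V1 ∨ u ∈ V2) {D : Set V} (hD : IsDomOn G Set.univ D)
    (he : ∃ e, e ∈ D ∧ e ∈ V1 ∧ (e = x ∨ G.Adj e x)) :
    IsDomOn G V1 (D ∩ V1) := by
  refine ⟨inter_subset_right, ?_⟩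
  intro v hv
  by_cases hvx : v = x
  · obtain ⟨e, heD, heW, hex⟩ := he
    exact ⟨e, ⟨heD, heW⟩, hvx ▸ hex⟩
  · obtain ⟨s, hsD, hcase⟩ := hD.2 v trivial
    rcases hcase with rfl | hadj
    · exact ⟨s, ⟨hsD, hv⟩, Or.inl rfl⟩
    · by_cases hsW : s ∈ V1
      · exact ⟨s, ⟨hsD, hsW⟩, Or.inr hadj⟩
      · have hsW' : s ∈ V2 := (hcover s).resolve_left hsW
        by_cases hsx : s = x
        · exact absurd (hsx ▸ hxW) hsW
        · exact absurd hadj.symm (hsepW v hv s hsW' hvx hsx)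

lemma lower_bound (hunion : V1 ∪ V2 = Set.univ) (hinter : V1 ∩ V2 = {x})
    (hsep : ∀ a ∈ V1, ∀ b ∈ V2, a ≠ x → b ≠ x → ¬ G.Adj a b) :
    domNumOn G V1 + domNumOn G V2 ≤ domNumOn G Set.univ + 1 := by
  have hxV12 : x ∈ V1 ∩ V2 := by rw [hinter]; rfl
  have hxV1 : x ∈ V1 := hxV12.1
  have hxV2 : x ∈ V2 := hxV12.2
  have hcover : ∀ u, u ∈ V1 ∨ u ∈ V2 := by
    intro u
    have : u ∈ V1 ∪ V2 := hunion ▸ trivial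
    exact this
  have hsep' : ∀ a ∈ V2, ∀ b ∈ V1, a ≠ x → b ≠ x → ¬ G.Adj a b :=
    fun a ha b hb hax hbx hadj => hsep b hb a ha hbx hax hadj.symm
  have hcover' : ∀ u, u ∈ V2 ∨ u ∈ V1 := fun u => (hcover u).symm
  obtain ⟨D, hD, hDc⟩ := exists_min_dom G Set.univ
  have hU : (D ∩ V1) ∪ (D ∩ V2) = D := by
    rw [← Set.inter_union_distrib_left, hunion, Set.inter_univ]
  have hI : (D ∩ V1) ∩ (D ∩ V2) = D ∩ {x} := by
    rw [← hinter]; ext u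
    simp only [Set.mem_inter_iff]; tauto
  have hcard := Set.ncard_union_add_ncard_inter (D ∩ V1) (D ∩ V2)
  rw [hU, hI] at hcard
  obtain ⟨d, hdD, hdx⟩ := hD.2 x trivial
  by_cases hxD : x ∈ D
  · have h1 := domNumOn_le G (side_strong hxV1 hsep hcover hD ⟨x, hxD, hxV1, Or.inl rfl⟩)
    have h2 := domNumOn_le G (side_strong hxV2 hsep' hcover' hD ⟨x, hxD, hxV2, Or.inl rfl⟩)
    have hsing : (D ∩ {x}).ncard ≤ 1 := by
      calc (D ∩ {x}).ncard ≤ ({x} : Set V).ncard := Set.ncard_le_ncard inter_subset_right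
        _ = 1 := Set.ncard_singleton x
    omega
  · have hsing : (D ∩ {x}).ncard = 0 := by
      rw [Set.inter_singleton_eq_empty.mpr hxD]; exact Set.ncard_empty V
    have hdxne : d ≠ x := fun h => hxD (h ▸ hdD)
    have hadj : G.Adj d x := hdx.resolve_left hdxne
    rcases hcover d with hdV1 | hdV2
    · have h1 := domNumOn_le G (side_strong hxV1 hsep hcover hD ⟨d, hdD, hdV1, Or.inr hadj⟩)
      have h2 := domNumOn_le G (side_insert hxV2 hsep' hcover' hD)
      have h3 := Set.ncard_insert_le x (D ∩ V2)
      omega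
    · have h1 := domNumOn_le G (side_strong hxV2 hsep' hcover' hD ⟨d, hdD, hdV2, Or.inr hadj⟩)
      have h2 := domNumOn_le G (side_insert hxV1 hsep hcover hD)
      have h3 := Set.ncard_insert_le x (D ∩ V1)
      omega

end Coal


lemma crit_drop {V : Type*} [Fintype V] (G : SimpleGraph V) {A : Set V} {y : V}
    (hy : y ∈ A) (h : IsCritVertexOn G A y) :
    domNumOn G (A \ {y}) + 1 = domNumOn G A := by
  have h2 := domNumOn_le_sdiff_add_one G hy
  have h1 : domNumOn G (A \ {y}) < domNumOn G A := h
  omega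

set_option maxHeartbeats 1000000 in
lemma main_coal {V : Type*} [Fintype V] {G : SimpleGraph V} {x : V} {V1 V2 : Set V}
    (hunion : V1 ∪ V2 = Set.univ) (hinter : V1 ∩ V2 = {x})
    (hsep : ∀ a ∈ V1, ∀ b ∈ V2, a ≠ x → b ≠ x → ¬ G.Adj a b)
    (h1 : CriticalOn G V1) (h2 : WeakBicriticalOn G V2)
    (hx : IsCritVertexOn G V2 x) :
    WeakBicriticalOn G Set.univ := by
  have hxV12 : x ∈ V1 ∩ V2 := by rw [hinter]; rfl
  have hxV1 : x ∈ V1 := hxV12.1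
  have hxV2 : x ∈ V2 := hxV12.2
  have hcover : ∀ u, u ∈ V1 ∨ u ∈ V2 := fun u => by
    have : u ∈ V1 ∪ V2 := hunion ▸ trivial
    exact this
  have huniq : ∀ u, u ∈ V1 → u ∈ V2 → u = x := fun u h1 h2 => by
    have : u ∈ V1 ∩ V2 := ⟨h1, h2⟩
    rw [hinter] at this; exact this
  have e1v : ∀ v ∈ V1, domNumOn G (V1 \ {v}) + 1 = domNumOn G V1 :=
    fun v hv => crit_drop G hv (h1 v hv)
  have e1 := e1v x hxV1
  have e2 : domNumOn G (V2 \ {x}) + 1 = domNumOn G V2 := crit_drop G hxV2 hx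
  have hI0 : Set.univ = (V1 \ {x}) ∪ V2 := by
    ext u
    have hc := hcover u
    simp only [Set.mem_diff, Set.mem_union, Set.mem_univ, Set.mem_singleton_iff, true_iff]
    rcases eq_or_ne u x with rfl | hux <;> tauto
  have hγup : domNumOn G Set.univ ≤ domNumOn G (V1 \ {x}) + domNumOn G V2 := by
    rw [hI0]; exact domNumOn_union_le G _ _
  have hlow := lower_bound hunion hinter hsep
  have hγ : domNumOn G Set.univ + 1 = domNumOn G V1 + domNumOn G V2 := by omega
  -- upper bound when deleting x
  have hIx : Set.univ \ {x} = (V1 \ {x}) ∪ (V2 \ {x}) := by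
    ext u
    have hc := hcover u
    simp only [Set.mem_diff, Set.mem_union, Set.mem_univ, Set.mem_singleton_iff, true_and]
    rcases eq_or_ne u x with rfl | hux <;> tauto
  have ubx : domNumOn G (Set.univ \ {x}) ≤ domNumOn G (V1 \ {x}) + domNumOn G (V2 \ {x}) := by
    rw [hIx]; exact domNumOn_union_le G _ _
  have ub1 : ∀ v ∈ V1, v ≠ x →
      domNumOn G (Set.univ \ {v}) ≤ domNumOn G (V1 \ {v}) + domNumOn G (V2 \ {x}) := by
    intro v hv1 hvx
    have hvx' : x ≠ v := hvx.symm
    have hid : Set.univ \ {v} = (V1 \ {v}) ∪ (V2 \ {x}) := by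
      ext u
      have hc := hcover u
      have hq := huniq u
      simp only [Set.mem_diff, Set.mem_union, Set.mem_univ, Set.mem_singleton_iff, true_and]
      rcases eq_or_ne u x with rfl | hux
      · tauto
      · rcases eq_or_ne u v with rfl | huv <;> tauto
    rw [hid]; exact domNumOn_union_le G _ _
  have ub2 : ∀ v ∈ V2, v ≠ x →
      domNumOn G (Set.univ \ {v}) ≤ domNumOn G (V1 \ {x}) + domNumOn G (V2 \ {v}) := by
    intro v hv2 hvx
    have hvx' : x ≠ v := hvx.symm
    have hid : Set.univ \ {v} = (V1 \ {x}) ∪ (V2 \ {v}) := by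
      ext u
      have hc := hcover u
      have hq := huniq u
      simp only [Set.mem_diff, Set.mem_union, Set.mem_univ, Set.mem_singleton_iff, true_and]
      rcases eq_or_ne u x with rfl | hux
      · tauto
      · rcases eq_or_ne u v with rfl | huv <;> tauto
    rw [hid]; exact domNumOn_union_le G _ _
  constructor
  · intro v _
    by_cases hvx : v = x
    · rw [hvx]; omega
    · rcases hcover v with hv1 | hv2
      · have hb := ub1 v hv1 hvx
        have he := e1v v hv1
        omega
      · have hb := ub2 v hv2 hvx
        have he := h2.1 v hv2
        omega
  · intro v _ hveq
    have hvx : v ≠ x := by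
      intro hvx0
      rw [hvx0] at hveq
      omega
    have hvx' : x ≠ v := hvx.symm
    have hv2 : v ∈ V2 := by
      rcases hcover v with hv1 | hv2
      · exfalso
        have hb := ub1 v hv1 hvx
        have he := e1v v hv1
        omega
      · exact hv2
    have hb := ub2 v hv2 hvx
    have hV2v : domNumOn G (V2 \ {v}) = domNumOn G V2 :=
      le_antisymm (h2.1 v hv2) (by omega)
    have hcrit2 : CriticalOn G (V2 \ {v}) := h2.2 v hv2 hV2v
    have cd : ∀ u ∈ V2 \ {v},
        domNumOn G ((V2 \ {v}) \ {u}) + 1 = domNumOn G (V2 \ {v}) :=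
      fun u hu => crit_drop G hu (hcrit2 u hu)
    intro w hw
    have hwv : w ≠ v := by simpa using hw.2
    show domNumOn G ((Set.univ \ {v}) \ {w}) < domNumOn G (Set.univ \ {v})
    rw [hveq]
    by_cases hwx : w = x
    · rw [hwx]
      have hid : (Set.univ \ {v}) \ {x} = (V1 \ {x}) ∪ ((V2 \ {v}) \ {x}) := by
        ext u
        clear h1 h2 hx e1v e1 e2 hI0 hγup hlow hγ hIx ubx ub1 ub2 hb hV2v hcrit2 cd hveq
        have hc := hcover u
        have hq := huniq u
        simp only [Set.mem_diff, Set.mem_union, Set.mem_univ, Set.mem_singleton_iff, true_and]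
        rcases eq_or_ne u x with rfl | hux
        · tauto
        · rcases eq_or_ne u v with rfl | huv <;> tauto
      have hub : domNumOn G ((Set.univ \ {v}) \ {x}) ≤
          domNumOn G (V1 \ {x}) + domNumOn G ((V2 \ {v}) \ {x}) := by
        rw [hid]; exact domNumOn_union_le G _ _
      have hcd := cd x ⟨hxV2, hvx'⟩
      omega
    · have hwx' : x ≠ w := fun h => hwx h.symm
      rcases hcover w with hw1 | hw2
      · have hid : (Set.univ \ {v}) \ {w} = (V1 \ {w}) ∪ ((V2 \ {v}) \ {x}) := by
          ext u
          clear h1 h2 hx e1v e1 e2 hI0 hγup hlow hγ hIx ubx ub1 ub2 hb hV2v hcrit2 cd hveq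
          have hc := hcover u
          have hq := huniq u
          simp only [Set.mem_diff, Set.mem_union, Set.mem_univ, Set.mem_singleton_iff, true_and]
          rcases eq_or_ne u x with rfl | hux
          · tauto
          · rcases eq_or_ne u v with rfl | huv
            · tauto
            · rcases eq_or_ne u w with rfl | huw <;> tauto
        have hub : domNumOn G ((Set.univ \ {v}) \ {w}) ≤
            domNumOn G (V1 \ {w}) + domNumOn G ((V2 \ {v}) \ {x}) := by
          rw [hid]; exact domNumOn_union_le G _ _
        have hcd := cd x ⟨hxV2, hvx'⟩
        have he := e1v w hw1
        omega
      · have hid : (Set.univ \ {v}) \ {w} = (V1 \ {x}) ∪ ((V2 \ {v}) \ {w}) := by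
          ext u
          clear h1 h2 hx e1v e1 e2 hI0 hγup hlow hγ hIx ubx ub1 ub2 hb hV2v hcrit2 cd hveq
          have hc := hcover u
          have hq := huniq u
          simp only [Set.mem_diff, Set.mem_union, Set.mem_univ, Set.mem_singleton_iff, true_and]
          rcases eq_or_ne u x with rfl | hux
          · tauto
          · rcases eq_or_ne u v with rfl | huv
            · tauto
            · rcases eq_or_ne u w with rfl | huw <;> tauto
        have hub : domNumOn G ((Set.univ \ {v}) \ {w}) ≤
            domNumOn G (V1 \ {x}) + domNumOn G ((V2 \ {v}) \ {w}) := by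
          rw [hid]; exact domNumOn_union_le G _ _
        have hcd := cd w ⟨hw2, hwv⟩
        omega

/-- Coalescence: if Hᵢ is critical, H₃₋ᵢ is weak bicritical, and x is a critical vertex of
H₃₋ᵢ for some i, then G is weak bicritical. -/
theorem stmt_12 {V : Type*} [Fintype V] (G : SimpleGraph V) (x : V) (V1 V2 : Set V)
    (hunion : V1 ∪ V2 = Set.univ) (hinter : V1 ∩ V2 = {x})
    (hsep : ∀ a ∈ V1, ∀ b ∈ V2, a ≠ x → b ≠ x → ¬ G.Adj a b)
    (hx1 : ∃ a ∈ V1, G.Adj x a) (hx2 : ∃ b ∈ V2, G.Adj x b)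
    (h : (CriticalOn G V1 ∧ WeakBicriticalOn G V2 ∧ IsCritVertexOn G V2 x) ∨
      (CriticalOn G V2 ∧ WeakBicriticalOn G V1 ∧ IsCritVertexOn G V1 x)) :
    WeakBicriticalOn G Set.univ := by
  rcases h with ⟨h1, h2, hx⟩ | ⟨h1, h2, hx⟩
  · exact main_coal hunion hinter hsep h1 h2 hx
  · have hunion' : V2 ∪ V1 = Set.univ := by rw [Set.union_comm]; exact hunion
    have hinter' : V2 ∩ V1 = {x} := by rw [Set.inter_comm]; exact hinter
    have hsep' : ∀ a ∈ V2, ∀ b ∈ V1, a ≠ x → b ≠ x → ¬ G.Adj a b :=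
      fun a ha b hb hax hbx hadj => hsep b hb a ha hbx hax hadj.symm
    exact main_coal hunion' hinter' hsep' h1 h2 hx
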